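/- arXiv:2508.18576 — 4 statements merged into one kernel-verified Lean document; each statement's English description precedes it below -/
import Mathlib

section
/- The serialization graph of any set of committed transactions executed under strict two-phase locking is acyclic. -/
/-- The serialization graph of any set of committed transactions executed
under (strict) two-phase locking is acyclic.  Each operation `o` (of transaction
`txn o` on item `item o`, possibly a write, at time `time o`) is covered by a lock on
its item held by its transaction from `acq` to `rel`; 2PL says all acquisitions of a
transaction precede all its releases; locks covering conflicting operations of
different transactions are held during disjoint intervals.  The serialization graph
has an edge `T → T'` when some operation of `T` conflicts with and precedes some
operation of `T'`. -/
theorem stmt4 {Op Txn Item : Type*}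
    (txn : Op → Txn) (item : Op → Item) (isWrite : Op → Bool) (time : Op → ℕ)
    (acq rel : Txn → Item → ℕ)
    (hhold : ∀ o, acq (txn o) (item o) ≤ time o ∧ time o ≤ rel (txn o) (item o))
    (h2pl : ∀ T x y, acq T x ≤ rel T y)
    (hexcl : ∀ o o', txn o ≠ txn o' → item o = item o' →
        (isWrite o = true ∨ isWrite o' = true) →
        rel (txn o) (item o) < acq (txn o') (item o') ∨
        rel (txn o') (item o') < acq (txn o) (item o)) :
    ∀ T, ¬ Relation.TransGen
      (fun T T' => T ≠ T' ∧ ∃ o o', txn o = T ∧ txn o' = T' ∧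
        item o = item o' ∧ (isWrite o = true ∨ isWrite o' = true) ∧ time o < time o')
      T T := by

  intro T hcyc
  -- From an edge T → T', derive ∃ x y, rel T x < acq T' y
  have key : ∀ T T', (T ≠ T' ∧ ∃ o o', txn o = T ∧ txn o' = T' ∧
        item o = item o' ∧ (isWrite o = true ∨ isWrite o' = true) ∧ time o < time o') →
      ∃ x y, rel T x < acq T' y := by
    rintro T T' ⟨hne, o, o', rfl, rfl, hitem, hw, ht⟩
    refine ⟨item o, item o', ?_⟩
    rcases hexcl o o' hne hitem hw with h | h
    · exact h
    · exfalso
      have h1 := (hhold o).1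
      have h2 := (hhold o').2
      omega
  have trans : ∀ {A B}, Relation.TransGen
      (fun T T' => T ≠ T' ∧ ∃ o o', txn o = T ∧ txn o' = T' ∧
        item o = item o' ∧ (isWrite o = true ∨ isWrite o' = true) ∧ time o < time o')
      A B → ∃ x y, rel A x < acq B y := by
    intro A B h
    induction h with
    | single h => exact key _ _ h
    | tail _ h ih =>
      obtain ⟨x, y, hxy⟩ := ih
      obtain ⟨x', y', h'⟩ := key _ _ h
      exact ⟨x, y', lt_of_lt_of_le hxy (le_trans (h2pl _ y x') (le_of_lt h'))⟩
  obtain ⟨x, y, h⟩ := trans hcyc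
  exact absurd (h2pl T y x) (not_le.mpr h)
end

section
/- If the SC-graph of a transaction chopping contains no SC-cycle (a cycle containing both an S-edge and a C-edge), then every execution in which each piece follows two-phase locking has an acyclic serialization graph over the original transactions, and is therefore equivalent to some serial execution. -/
section SC5aux

variable {Piece : Type*} (SGp S : Piece → Piece → Prop)

def EE (b : Bool) (p q : Piece) : Prop := if b then SGp p q else S p q

def cw : Piece → List (Bool × Piece) → Piece → Prop
  | p, [], q => p = q
  | p, (b, r) :: l, q => EE SGp S b p r ∧ cw r l q

variable {SGp S}

lemma cw_append {p r q : Piece} {u v : List (Bool × Piece)}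
    (h1 : cw SGp S p u r) (h2 : cw SGp S r v q) : cw SGp S p (u ++ v) q := by
  induction u generalizing p with
  | nil => simp only [cw] at h1; subst h1; simpa using h2
  | cons a t ih =>
    obtain ⟨b, x⟩ := a
    exact ⟨h1.1, ih h1.2⟩

lemma cw_split {p q : Piece} {l : List (Bool × Piece)} (h : cw SGp S p l q) :
    ∀ k (hk : k < l.length),
      cw SGp S p (l.take (k + 1)) (l[k]).2 ∧ cw SGp S (l[k]).2 (l.drop (k + 1)) q := by
  induction l generalizing p with
  | nil => intro k hk; simp at hk
  | cons a t ih =>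
    obtain ⟨b, x⟩ := a
    intro k hk
    cases k with
    | zero => exact ⟨⟨h.1, rfl⟩, h.2⟩
    | succ k =>
      obtain ⟨h1, h2⟩ := ih h.2 k (by simpa using hk)
      exact ⟨⟨h.1, h1⟩, h2⟩

lemma cw_true {p q : Piece} {l : List (Bool × Piece)} (h : cw SGp S p l q)
    (hne : l ≠ []) (hall : ∀ x ∈ l, x.1 = true) : Relation.TransGen SGp p q := by
  induction l generalizing p with
  | nil => simp at hne
  | cons a t ih =>
    obtain ⟨b, x⟩ := a
    have hb : b = true := hall _ (.head _)
    subst hb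
    have hpx : SGp p x := h.1
    cases t with
    | nil =>
      have hxq : x = q := h.2
      exact hxq ▸ Relation.TransGen.single hpx
    | cons c u =>
      exact Relation.TransGen.head hpx (ih h.2 (by simp) fun y hy => hall y (.tail _ hy))

lemma cw_succ {p q : Piece} {l : List (Bool × Piece)} (h : cw SGp S p l q)
    {k : ℕ} (hk : k + 1 < l.length) :
    EE SGp S (l[k + 1]).1 (l[k]'(by omega)).2 (l[k + 1]).2 := by
  have h2 := (cw_split h k (by omega)).2
  rw [List.drop_eq_getElem_cons hk] at h2
  exact h2.1

lemma cw_head {p q : Piece} {l : List (Bool × Piece)} (h : cw SGp S p l q)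
    (hne : 0 < l.length) : EE SGp S (l[0]).1 p (l[0]).2 := by
  cases l with
  | nil => simp at hne
  | cons a t => obtain ⟨b, x⟩ := a; exact h.1

lemma cw_last {p q : Piece} {l : List (Bool × Piece)} (h : cw SGp S p l q)
    (hne : 0 < l.length) : (l[l.length - 1]'(by omega)).2 = q := by
  have h2 := (cw_split h (l.length - 1) (by omega)).2
  rw [show l.length - 1 + 1 = l.length by omega, List.drop_length] at h2
  exact h2

lemma cw_build {Txn : Type*} {txn : Piece → Txn}
    (hS : ∀ p q, S p q ↔ p ≠ q ∧ txn p = txn q) {T T' : Txn}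
    (h : Relation.TransGen
      (fun T T' => T ≠ T' ∧ ∃ p p', txn p = T ∧ txn p' = T' ∧ SGp p p') T T') :
    ∃ p q l, txn p = T ∧ txn q = T' ∧ cw SGp S p l q ∧ ∃ x ∈ l, x.1 = true := by
  induction h with
  | single h =>
    obtain ⟨-, p, p', hp, hp', hE⟩ := h
    exact ⟨p, p', [(true, p')], hp, hp',
      ⟨by simpa [EE] using hE, rfl⟩, ⟨(true, p'), by simp⟩⟩
  | tail hTT h ih =>
    obtain ⟨p, q, l, hp, hq, hcw, htrue⟩ := ih
    obtain ⟨-, r, r', hr, hr', hE⟩ := h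
    by_cases hqr : q = r
    · subst hqr
      refine ⟨p, r', l ++ [(true, r')], hp, hr', cw_append hcw ?_, ?_⟩
      · exact ⟨by simpa [EE] using hE, rfl⟩
      · obtain ⟨x, hx, hx1⟩ := htrue; exact ⟨x, by simp [hx], hx1⟩
    · have hsr : S q r := (hS q r).mpr ⟨hqr, hq.trans hr.symm⟩
      refine ⟨p, r', l ++ [(false, r), (true, r')], hp, hr', cw_append hcw ?_, ?_⟩
      · exact ⟨by simpa [EE] using hsr, by simpa [EE] using hE, rfl⟩
      · obtain ⟨x, hx, hx1⟩ := htrue; exact ⟨x, by simp [hx], hx1⟩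

end SC5aux



/-- An SC-cycle: a simple cycle (of length `n ≥ 2`, given by an injective map from
`ZMod n`) in the SC-graph whose `i`-th edge is a C-edge when `c i = true` and an
S-edge when `c i = false`, containing at least one C-edge and at least one S-edge. -/
def IsSCCycle {Piece : Type*} (S C : Piece → Piece → Prop)
    (n : ℕ) (f : ZMod n → Piece) (c : ZMod n → Bool) : Prop :=
  2 ≤ n ∧ Function.Injective f ∧
  (∀ i, if c i then C (f i) (f (i + 1)) else S (f i) (f (i + 1))) ∧
  (∃ i, c i = true) ∧ (∃ i, c i = false)

/-- If the SC-graph of a transaction chopping contains no SC-cycle (a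
cycle containing both an S-edge and a C-edge), then every execution in which each
piece follows two-phase locking (so the piece-level serialization graph `SGp` is
acyclic, and every `SGp` edge is a conflict, i.e. a C-edge) has an acyclic
serialization graph over the original transactions, and is therefore equivalent to
some serial execution. -/
theorem stmt5 {Piece Txn : Type*} (txn : Piece → Txn)
    (S C SGp : Piece → Piece → Prop)
    (hS : ∀ p q, S p q ↔ p ≠ q ∧ txn p = txn q)
    (hC : ∀ p q, C p q → txn p ≠ txn q)
    (hCsymm : ∀ p q, C p q → C q p)
    (hproj : ∀ p q, SGp p q → C p q)
    (hacy : ∀ p, ¬ Relation.TransGen SGp p p)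
    (hnoSC : ¬ ∃ (n : ℕ) (f : ZMod n → Piece) (c : ZMod n → Bool), IsSCCycle S C n f c) :
    ∀ T : Txn, ¬ Relation.TransGen
      (fun T T' => T ≠ T' ∧ ∃ p p', txn p = T ∧ txn p' = T' ∧ SGp p p') T T := by
  classical
  intro T hT
  obtain ⟨p0, q0, l0, hp0, hq0, hcw0, htrue0⟩ := cw_build hS hT
  -- close the walk
  have hPex : ∃ m, ∃ (p : Piece) (l : List (Bool × Piece)),
      l.length = m ∧ cw SGp S p l p ∧ ∃ x ∈ l, x.1 = true := by
    by_cases hpq : p0 = q0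
    · subst hpq
      exact ⟨l0.length, p0, l0, rfl, hcw0, htrue0⟩
    · refine ⟨_, p0, l0 ++ [(false, p0)], rfl, cw_append hcw0 ⟨?_, rfl⟩, ?_⟩
      · simpa [EE] using (hS q0 p0).mpr ⟨fun h => hpq h.symm, hq0.trans hp0.symm⟩
      · obtain ⟨x, hx, h1⟩ := htrue0; exact ⟨x, by simp [hx], h1⟩
  set n := Nat.find hPex with hn_def
  obtain ⟨p, l, hlen, hcw, htrue⟩ := Nat.find_spec hPex
  rw [← hn_def] at hlen
  have hmin : ∀ m, m < n → ¬ ∃ (p : Piece) (l : List (Bool × Piece)),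
      l.length = m ∧ cw SGp S p l p ∧ ∃ x ∈ l, x.1 = true :=
    fun m hm => Nat.find_min hPex (hn_def ▸ hm)
  -- basic facts
  have hlne : l ≠ [] := by
    rintro rfl; obtain ⟨x, hx, -⟩ := htrue; simp at hx
  have hpos : 0 < n := by
    have := List.length_pos_iff.mpr hlne; omega
  -- no repeated vertices
  have hnodup : ∀ i j (hi : i < n) (hj : j < n),
      (l[i]'(by omega)).2 = (l[j]'(by omega)).2 → i = j := by
    have key : ∀ i j (hij : i < j) (hj : j < n),
        (l[i]'(by omega)).2 ≠ (l[j]'(by omega)).2 := by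
      intro i j hij hj heq
      have hi : i < l.length := by omega
      have hjl : j < l.length := by omega
      obtain ⟨h1a, h1b⟩ := cw_split hcw i hi
      have hdlen : (l.drop (i + 1)).length = l.length - (i + 1) := by simp
      have hk2 : j - i - 1 < (l.drop (i + 1)).length := by omega
      obtain ⟨h2a, h2b⟩ := cw_split h1b (j - i - 1) hk2
      have hgd : ((l.drop (i + 1))[j - i - 1]'hk2) = l[j]'hjl := by
        rw [List.getElem_drop]; congr 1; omega
      rw [hgd] at h2a h2b
      rw [← heq] at h2a
      -- A : closed walk at l[i].2 ; B : closed walk at l[j].2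
      have hBcw0 := cw_append h2b h1a
      rw [heq] at hBcw0
      have hAlen : ((l.drop (i + 1)).take (j - i - 1 + 1)).length = j - i := by
        simp; omega
      have hBlen : ((l.drop (i + 1)).drop (j - i - 1 + 1) ++ l.take (i + 1)).length
          = n - (j - i) := by
        simp; omega
      obtain ⟨x, hxmem, hx1⟩ := htrue
      have hxsplit : x ∈ (l.drop (i + 1)).take (j - i - 1 + 1) ∨
          x ∈ (l.drop (i + 1)).drop (j - i - 1 + 1) ++ l.take (i + 1) := by
        have hld : l = l.take (i + 1) ++ ((l.drop (i + 1)).take (j - i - 1 + 1)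
            ++ (l.drop (i + 1)).drop (j - i - 1 + 1)) := by
          rw [List.take_append_drop, List.take_append_drop]
        rw [hld] at hxmem
        simp only [List.mem_append] at hxmem
        rcases hxmem with h | h | h
        · exact Or.inr (List.mem_append_right _ h)
        · exact Or.inl h
        · exact Or.inr (List.mem_append_left _ h)
      rcases hxsplit with hxA | hxB
      · exact hmin (j - i) (by omega) ⟨_, _, hAlen, h2a, x, hxA, hx1⟩
      · exact hmin (n - (j - i)) (by omega) ⟨_, _, hBlen, hBcw0, x, hxB, hx1⟩
    intro i j hi hj heq
    rcases lt_trichotomy i j with h | h | h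
    · exact absurd heq (key i j h hj)
    · exact h
    · exact absurd heq.symm (key j i h hi)
  by_cases hall : ∀ x ∈ l, x.1 = true
  · exact hacy p (cw_true hcw hlne hall)
  push_neg at hall
  obtain ⟨y, hymem, hy1⟩ := hall
  have hyfalse : y.1 = false := by simpa using hy1
  -- n ≥ 2
  have hn2 : 2 ≤ n := by
    by_contra h
    have hn1 : n = 1 := by omega
    rw [hn1] at hlen
    obtain ⟨a, ha⟩ := List.length_eq_one_iff.mp hlen
    obtain ⟨x, hxmem, hx1⟩ := htrue
    rw [ha] at hxmem hymem
    simp only [List.mem_singleton] at hxmem hymem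
    rw [hxmem] at hx1; rw [hymem] at hyfalse
    rw [hx1] at hyfalse; simp at hyfalse
  haveI : NeZero n := ⟨by omega⟩
  haveI : Fact (1 < n) := ⟨by omega⟩
  apply hnoSC
  have hvlt : ∀ i : ZMod n, i.val < l.length := fun i => by
    have := ZMod.val_lt i; omega
  refine ⟨n, fun i => (l[i.val]'(hvlt i)).2, fun i => (l[(i + 1).val]'(hvlt _)).1,
    hn2, ?_, ?_, ?_, ?_⟩
  · -- injective
    intro i j hij
    exact ZMod.val_injective n
      (hnodup i.val j.val (ZMod.val_lt i) (ZMod.val_lt j) hij)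
  · -- edges
    intro i
    simp only []
    have hsucc : (i + 1).val = (i.val + 1) % n := by
      rw [ZMod.val_add, ZMod.val_one]
    have hlt := ZMod.val_lt i
    by_cases hcase : i.val + 1 < n
    · have hk : (i + 1).val = i.val + 1 := by rw [hsucc, Nat.mod_eq_of_lt hcase]
      have hE := cw_succ hcw (k := i.val) (by omega)
      simp only [hk]
      by_cases hb : (l[i.val + 1]'(by omega)).1 = true
      · rw [if_pos hb]; rw [hb] at hE
        exact hproj _ _ (by simpa [EE] using hE)
      · rw [if_neg hb]
        have hb' : (l[i.val + 1]'(by omega)).1 = false := by simpa using hb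
        rw [hb'] at hE
        simpa [EE] using hE
    · have hiv : i.val = n - 1 := by omega
      have hk : (i + 1).val = 0 := by
        rw [hsucc, show i.val + 1 = n by omega, Nat.mod_self]
      have hE := cw_head hcw (by omega)
      have hlast := cw_last hcw (by omega)
      have hvi : (l[i.val]'(hvlt i)).2 = p := by
        have hh : i.val = l.length - 1 := by omega
        simp only [hh]; exact hlast
      simp only [hk]
      rw [hvi]
      by_cases hb : (l[0]'(by omega)).1 = true
      · rw [if_pos hb]; rw [hb] at hE
        exact hproj _ _ (by simpa [EE] using hE)
      · rw [if_neg hb]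
        have hb' : (l[0]'(by omega)).1 = false := by simpa using hb
        rw [hb'] at hE
        simpa [EE] using hE
  · -- exists true
    obtain ⟨x, hxmem, hx1⟩ := htrue
    obtain ⟨k, hk, hkx⟩ := List.mem_iff_getElem.mp hxmem
    refine ⟨(k : ZMod n) - 1, ?_⟩
    have h1 : ((k : ZMod n) - 1 + 1) = (k : ZMod n) := by ring
    have hv : ((k : ZMod n)).val = k := by
      rw [ZMod.val_natCast, Nat.mod_eq_of_lt (by omega)]
    simp only [h1, hv]
    rw [show (l[k]'(by omega)) = x from hkx]
    exact hx1
  · -- exists false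
    obtain ⟨k, hk, hkx⟩ := List.mem_iff_getElem.mp hymem
    refine ⟨(k : ZMod n) - 1, ?_⟩
    have h1 : ((k : ZMod n) - 1 + 1) = (k : ZMod n) := by ring
    have hv : ((k : ZMod n)).val = k := by
      rw [ZMod.val_natCast, Nat.mod_eq_of_lt (by omega)]
    simp only [h1, hv]
    rw [show (l[k]'(by omega)) = y from hkx]
    exact hyfalse
end

section
/- Suppose the serialization graph over pieces of chopped transactions is acyclic, every edge of that graph projects to a C-edge of the SC-graph, and any two distinct pieces of the same transaction are joined by an S-edge. If the serialization graph over whole transactions contains a cycle, then the SC-graph contains a cycle using at least one S-edge and at least one C-edge. -/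
/-- From a transaction-level path, build a piece-level walk whose edges are either
`SGp`-edges or "same transaction, distinct pieces" edges, with no two consecutive
same-transaction edges, ending in an `SGp`-edge. -/
private lemma walk_of_transGen {Piece Txn : Type*} (txn : Piece → Txn)
    (SGp : Piece → Piece → Prop)
    (hne : ∀ p q, SGp p q → txn p ≠ txn q)
    {T T' : Txn}
    (h : Relation.TransGen
      (fun T T' => T ≠ T' ∧ ∃ p p', txn p = T ∧ txn p' = T' ∧ SGp p p') T T') :
    ∃ (m : ℕ) (v : ℕ → Piece), 1 ≤ m ∧ txn (v 0) = T ∧ txn (v m) = T' ∧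
      SGp (v (m-1)) (v m) ∧
      (∀ i < m, SGp (v i) (v (i+1)) ∨ (v i ≠ v (i+1) ∧ txn (v i) = txn (v (i+1)))) ∧
      (∀ i, i + 1 < m → ¬(txn (v i) = txn (v (i+1)) ∧ txn (v (i+1)) = txn (v (i+2)))) := by
  induction h with
  | single h =>
    obtain ⟨-, p, p', hp, hp', hpq⟩ := h
    refine ⟨1, fun i => if i = 0 then p else p', le_refl 1, by simpa using hp,
      by simpa using hp', by simpa using hpq, ?_, ?_⟩
    · intro i hi
      interval_cases i
      simpa using Or.inl hpq
    · intro i hi; omega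
  | tail h1 h2 ih =>
    obtain ⟨m, v, hm, hT0, hTm, hlast, hedge, hnoss⟩ := ih
    obtain ⟨-, p, p', hp, hp', hpq⟩ := h2
    by_cases hcase : p = v m
    · -- append a single SGp edge
      set v' : ℕ → Piece := fun i => if i ≤ m then v i else p' with hv'
      have hlo : ∀ i, i ≤ m → v' i = v i := by intro i hi; simp [hv', hi]
      have htop : v' (m+1) = p' := by simp [hv']
      refine ⟨m+1, v', by omega, ?_, ?_, ?_, ?_, ?_⟩
      · rw [hlo 0 (by omega)]; exact hT0
      · rw [htop]; exact hp'
      · have : m + 1 - 1 = m := by omega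
        rw [this, hlo m le_rfl, htop, ← hcase]; exact hpq
      · intro i hi
        rcases Nat.lt_or_ge i m with h' | h'
        · rw [hlo i (by omega), hlo (i+1) (by omega)]; exact hedge i h'
        · have : i = m := by omega
          rw [this, hlo m le_rfl, htop]
          exact Or.inl (hcase ▸ hpq)
      · intro i hi
        rcases Nat.lt_or_ge (i+1) m with h' | h'
        · rw [hlo i (by omega), hlo (i+1) (by omega), hlo (i+2) (by omega)]
          exact hnoss i h'
        · have : i + 1 = m := by omega
          rintro ⟨hs1, -⟩
          rw [hlo i (by omega), hlo (i+1) (by omega)] at hs1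
          exact hne _ _ (by rwa [← this, Nat.add_sub_cancel] at hlast) hs1
    · -- append a same-transaction edge and then an SGp edge
      set v' : ℕ → Piece := fun i => if i ≤ m then v i else if i = m + 1 then p else p'
        with hv'
      have hlo : ∀ i, i ≤ m → v' i = v i := by intro i hi; simp [hv', hi]
      have hm1 : v' (m+1) = p := by simp [hv']
      have hm2 : v' (m+2) = p' := by
        have h1 : ¬ (m + 2 ≤ m) := by omega
        have h2 : ¬ (m + 2 = m + 1) := by omega
        simp [hv', h1, h2]
      refine ⟨m+2, v', by omega, ?_, ?_, ?_, ?_, ?_⟩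
      · rw [hlo 0 (by omega)]; exact hT0
      · rw [hm2]; exact hp'
      · have : m + 2 - 1 = m + 1 := by omega
        rw [this, hm1, hm2]; exact hpq
      · intro i hi
        rcases Nat.lt_or_ge i m with h' | h'
        · rw [hlo i (by omega), hlo (i+1) (by omega)]; exact hedge i h'
        · rcases Nat.lt_or_ge i (m+1) with h'' | h''
          · have : i = m := by omega
            rw [this, hlo m le_rfl, hm1]
            exact Or.inr ⟨fun hh => hcase hh.symm, by rw [hTm, hp]⟩
          · have : i = m + 1 := by omega
            rw [this, hm1, hm2]
            exact Or.inl hpq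
      · intro i hi
        rcases Nat.lt_or_ge (i+1) m with h' | h'
        · rw [hlo i (by omega), hlo (i+1) (by omega), hlo (i+2) (by omega)]
          exact hnoss i h'
        · rcases Nat.lt_or_ge (i+1) (m+1) with h'' | h''
          · have : i + 1 = m := by omega
            rintro ⟨hs1, -⟩
            rw [hlo i (by omega), hlo (i+1) (by omega)] at hs1
            exact hne _ _ (by rwa [← this, Nat.add_sub_cancel] at hlast) hs1
          · have him : i = m := by omega
            rintro ⟨-, hs2⟩
            rw [him] at hs2
            rw [hm1, show m + 1 + 1 = m + 2 from rfl, hm2] at hs2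
            exact hne _ _ hpq hs2

/-- Suppose the piece-level serialization graph `SGp` is acyclic, every
edge of `SGp` projects to a C-edge of the SC-graph, and any two distinct pieces of the
same transaction are joined by an S-edge (C-edges only join pieces of different
transactions).  If the transaction-level serialization graph (edge `T → T'` iff
`T ≠ T'` and some piece of `T` has an `SGp`-edge to some piece of `T'`) contains a
cycle, then the SC-graph contains a cycle using at least one S-edge and at least one
C-edge. -/
theorem stmt6 {Piece Txn : Type*} (txn : Piece → Txn)
    (S C SGp : Piece → Piece → Prop)
    (hS : ∀ p q, p ≠ q → txn p = txn q → S p q)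
    (hC : ∀ p q, C p q → txn p ≠ txn q)
    (hproj : ∀ p q, SGp p q → C p q)
    (hacy : ∀ p, ¬ Relation.TransGen SGp p p)
    (hcyc : ∃ T : Txn, Relation.TransGen
      (fun T T' => T ≠ T' ∧ ∃ p p', txn p = T ∧ txn p' = T' ∧ SGp p p') T T) :
    ∃ (n : ℕ) (f : ZMod n → Piece) (c : ZMod n → Bool), IsSCCycle S C n f c := by
  have hne : ∀ p q, SGp p q → txn p ≠ txn q := fun p q h => hC p q (hproj p q h)
  obtain ⟨T, hT⟩ := hcyc
  obtain ⟨m₀, v₀, hm₀, hT0, hTm, hlast, hedge₀, hnoss₀⟩ := walk_of_transGen txn SGp hne hT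
  -- close the walk
  obtain ⟨m, v, hm, hclosed, hedge, hnoss⟩ :
      ∃ (m : ℕ) (v : ℕ → Piece), 1 ≤ m ∧ v m = v 0 ∧
        (∀ i < m, SGp (v i) (v (i+1)) ∨ (v i ≠ v (i+1) ∧ txn (v i) = txn (v (i+1)))) ∧
        (∀ i, i + 1 < m →
          ¬(txn (v i) = txn (v (i+1)) ∧ txn (v (i+1)) = txn (v (i+2)))) := by
    by_cases hc : v₀ m₀ = v₀ 0
    · exact ⟨m₀, v₀, hm₀, hc, hedge₀, hnoss₀⟩
    · set v' : ℕ → Piece := fun i => if i ≤ m₀ then v₀ i else v₀ 0 with hv'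
      have hlo : ∀ i, i ≤ m₀ → v' i = v₀ i := by intro i hi; simp [hv', hi]
      have htop : v' (m₀+1) = v₀ 0 := by simp [hv']
      refine ⟨m₀+1, v', by omega, by rw [htop, hlo 0 (by omega)], ?_, ?_⟩
      · intro i hi
        rcases Nat.lt_or_ge i m₀ with h' | h'
        · rw [hlo i (by omega), hlo (i+1) (by omega)]; exact hedge₀ i h'
        · have : i = m₀ := by omega
          rw [this, hlo m₀ le_rfl, htop]
          exact Or.inr ⟨hc, by rw [hTm, hT0]⟩
      · intro i hi
        rcases Nat.lt_or_ge (i+1) m₀ with h' | h'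
        · rw [hlo i (by omega), hlo (i+1) (by omega), hlo (i+2) (by omega)]
          exact hnoss₀ i h'
        · have : i + 1 = m₀ := by omega
          rintro ⟨hs1, -⟩
          rw [hlo i (by omega), hlo (i+1) (by omega)] at hs1
          exact hne _ _ (by rwa [← this, Nat.add_sub_cancel] at hlast) hs1
  clear hT hT0 hTm hlast hedge₀ hnoss₀ hm₀
  -- find a minimal-length repetition
  have hP : ∃ d, 1 ≤ d ∧ ∃ a, a + d ≤ m ∧ v a = v (a + d) :=
    ⟨m, hm, 0, by simpa using hclosed.symm⟩
  classical
  obtain ⟨n, ⟨hn1, a, hab, heq⟩, hmin⟩ :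
      ∃ n, (1 ≤ n ∧ ∃ a, a + n ≤ m ∧ v a = v (a + n)) ∧
        ∀ d < n, ¬(1 ≤ d ∧ ∃ a, a + d ≤ m ∧ v a = v (a + d)) :=
    ⟨Nat.find hP, Nat.find_spec hP, fun d hd => Nat.find_min hP hd⟩
  -- n ≥ 2
  have hn2 : 2 ≤ n := by
    rcases Nat.lt_or_ge n 2 with h | h
    · exfalso
      have hone : n = 1 := by omega
      rw [hone] at heq hab
      rcases hedge a (by omega) with h1 | h1
      · have := Relation.TransGen.single h1
        rw [← heq] at this
        exact hacy (v a) this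
      · exact h1.1 heq
    · exact h
  -- all vertices v (a+x), x < n, are distinct
  have hdist : ∀ x y, x < y → y < n → v (a + x) ≠ v (a + y) := by
    intro x y hxy hyn hvv
    refine hmin (y - x) (by omega) ⟨by omega, a + x, by omega, ?_⟩
    rw [show a + x + (y - x) = a + y by omega]
    exact hvv
  haveI : NeZero n := ⟨by omega⟩
  set f : ZMod n → Piece := fun k => v (a + k.val) with hf
  set c : ZMod n → Bool := fun k => decide (txn (f k) ≠ txn (f (k + 1))) with hc
  -- successor values
  have hval1 : (1 : ZMod n).val = 1 := by
    rw [← Nat.cast_one, ZMod.val_cast_of_lt (by omega)]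
  have hsucc : ∀ k : ZMod n,
      (k + 1).val = if k.val + 1 < n then k.val + 1 else 0 := by
    intro k
    have hk := ZMod.val_lt k
    rw [ZMod.val_add, hval1]
    split
    · exact Nat.mod_eq_of_lt (by omega)
    · have h : k.val + 1 = n := by omega
      rw [h, Nat.mod_self]
  -- values of f at natural-number casts
  have hF : ∀ k : ℕ, k < n → f (k : ZMod n) = v (a + k) := by
    intro k hk
    have : ((k : ZMod n)).val = k := by
      rw [ZMod.val_natCast, Nat.mod_eq_of_lt hk]
    simp [hf, this]
  have hF1 : ∀ k : ℕ, k + 1 < n → f ((k : ZMod n) + 1) = v (a + k + 1) := by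
    intro k hk
    have hkv : ((k : ZMod n)).val = k := by
      rw [ZMod.val_natCast, Nat.mod_eq_of_lt (by omega)]
    have : ((k : ZMod n) + 1).val = k + 1 := by rw [hsucc, hkv, if_pos hk]
    simp [hf, this, Nat.add_assoc]
  have hF2 : ∀ k : ℕ, k + 1 = n → f ((k : ZMod n) + 1) = v a := by
    intro k hk
    have hkv : ((k : ZMod n)).val = k := by
      rw [ZMod.val_natCast, Nat.mod_eq_of_lt (by omega)]
    have : ((k : ZMod n) + 1).val = 0 := by rw [hsucc, hkv, if_neg (by omega)]
    simp [hf, this]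
  have hcast : ∀ k : ZMod n, (↑(k.val) : ZMod n) = k := fun k => by rw [ZMod.natCast_val, ZMod.cast_id]
  -- each edge of the cycle is a walk edge
  have hedgef : ∀ k : ℕ, k < n →
      SGp (f (k : ZMod n)) (f ((k : ZMod n) + 1)) ∨
        (f (k : ZMod n) ≠ f ((k : ZMod n) + 1) ∧
          txn (f (k : ZMod n)) = txn (f ((k : ZMod n) + 1))) := by
    intro k hk
    have he := hedge (a + k) (by omega)
    rcases Nat.lt_or_ge (k + 1) n with h | h
    · rw [hF k hk, hF1 k h]
      exact he
    · have hkn : k + 1 = n := by omega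
      rw [hF k hk, hF2 k hkn]
      have h2 : v (a + k + 1) = v a := by
        rw [show a + k + 1 = a + n by omega, ← heq]
      rw [← h2]
      exact he
  have hinj : Function.Injective f := by
    intro x y hxy
    have hx := ZMod.val_lt x
    have hy := ZMod.val_lt y
    by_contra hne'
    have hvne : x.val ≠ y.val := fun h => hne' (ZMod.val_injective n h)
    rcases Nat.lt_or_ge x.val y.val with h | h
    · exact hdist x.val y.val h hy hxy
    · exact hdist y.val x.val (by omega) hx hxy.symm
  -- f k ≠ f (k+1)
  have hnext : ∀ k : ZMod n, f k ≠ f (k + 1) := by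
    intro k h
    have hk1 : k = k + 1 := hinj h
    have h1 : (1 : ZMod n) ≠ 0 := by
      intro h0
      have := hval1
      rw [h0, ZMod.val_zero] at this
      omega
    exact h1 (by linear_combination -hk1)
  refine ⟨n, f, c, hn2, hinj, ?_, ?_, ?_⟩
  · intro i
    by_cases ht : txn (f i) = txn (f (i + 1))
    · have : c i = false := by simp [hc, ht]
      rw [this]
      simpa using hS _ _ (hnext i) ht
    · have : c i = true := by simp [hc, ht]
      rw [this]
      simp only [if_true]
      have := hedgef i.val (ZMod.val_lt i)
      rw [hcast i] at this
      rcases this with h | h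
      · exact hproj _ _ h
      · exact absurd h.2 ht
  · -- some C edge: otherwise two consecutive S edges
    by_contra hall
    push_neg at hall
    have hallS : ∀ i : ZMod n, txn (f i) = txn (f (i + 1)) := by
      intro i
      have hi := hall i
      by_contra ht
      exact hi (by simp [hc, ht])
    have h0 : txn (v a) = txn (v (a + 1)) := by
      have h := hallS ((0 : ℕ) : ZMod n)
      rw [hF 0 (by omega), hF1 0 (by omega)] at h
      simpa using h
    have h1 : txn (v (a + 1)) = txn (v (a + 2)) := by
      have h := hallS ((1 : ℕ) : ZMod n)
      rcases Nat.lt_or_ge (1 + 1) n with hh | hh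
      · rw [hF 1 (by omega), hF1 1 hh] at h
        simpa using h
      · have hn2' : 1 + 1 = n := by omega
        rw [hF 1 (by omega), hF2 1 hn2'] at h
        rw [show a + 2 = a + n by omega, ← heq]
        exact h
    exact hnoss a (by omega) ⟨h0, h1⟩
  · -- some S edge: otherwise an SGp cycle
    by_contra hall
    push_neg at hall
    have hallC : ∀ k : ℕ, k < n → SGp (f (k : ZMod n)) (f ((k : ZMod n) + 1)) := by
      intro k hk
      have hi := hall (k : ZMod n)
      have ht : txn (f (k : ZMod n)) ≠ txn (f ((k : ZMod n) + 1)) := by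
        intro ht
        exact hi (by simp [hc, ht])
      rcases hedgef k hk with h | h
      · exact h
      · exact absurd h.2 ht
    -- chain up to an SGp cycle
    have key : ∀ k, k ≤ n → 1 ≤ k → Relation.TransGen SGp (v a) (v (a + k)) := by
      intro k
      induction k with
      | zero => omega
      | succ k ih =>
        intro hkn _
        have hstep : SGp (v (a + k)) (v (a + k + 1)) := by
          have h := hallC k (by omega)
          rcases Nat.lt_or_ge (k + 1) n with hh | hh
          · rwa [hF k (by omega), hF1 k hh] at h
          · have hkn' : k + 1 = n := by omega
            rw [hF k (by omega), hF2 k hkn'] at h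
            rwa [show a + k + 1 = a + n by omega, ← heq]
        rcases Nat.eq_zero_or_pos k with h | h
        · subst h
          simpa using Relation.TransGen.single hstep
        · exact Relation.TransGen.tail (ih (by omega) (by omega))
            (by rwa [show a + (k + 1) = a + k + 1 by omega])
    have hcycle := key n le_rfl (by omega)
    rw [← heq] at hcycle
    exact hacy (v a) hcycle
end

section
/- For the chopping of T1 = W(A)W(B) and T2 = W(B)W(A)R(C) into pieces T2a = W(B) and T2b = W(A)R(C) with T1 unchopped, where T2 acquires the lock on A before all other locks, the SC-graph (with two instances of each transaction) contains no cycle with both an S-edge and a C-edge. -/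
/-- Pieces of the chopping of `T1 = W(A)W(B)` (unchopped) and
`T2 = W(B)W(A)R(C)` chopped into `T2a = W(B)` and `T2b = W(A)R(C)`, with two
instances of each transaction to model self-conflicts.
Since `T2` acquires the lock on `A` before all other locks, the locking node of `A`
lies in piece `T2a`, which therefore holds locks `{A, B}`, while `T2b` holds only the
shared lock on `C`. -/
inductive Piece12 | T1i1 | T1i2 | T2a1 | T2b1 | T2a2 | T2b2
  deriving DecidableEq

open Piece12

/-- S-edges: consecutive pieces of one transaction instance (undirected). -/
def S12 : Piece12 → Piece12 → Prop := fun p q =>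
  (p = T2a1 ∧ q = T2b1) ∨ (p = T2b1 ∧ q = T2a1) ∨
  (p = T2a2 ∧ q = T2b2) ∨ (p = T2b2 ∧ q = T2a2)

/-- C-edges: pieces of different instances holding conflicting locks (same item, at
least one write).  `T1` instances and `T2a` pieces all hold write locks on `A` and
`B`, so they are pairwise connected; the `T2b` pieces hold only shared locks on `C`
and conflict with nothing. -/
def C12 : Piece12 → Piece12 → Prop := fun p q =>
  p ≠ q ∧ (p = T1i1 ∨ p = T1i2 ∨ p = T2a1 ∨ p = T2a2) ∧
    (q = T1i1 ∨ q = T1i2 ∨ q = T2a1 ∨ q = T2a2)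

-- appended proof part
lemma aux12 {n : ℕ} {f : ZMod n → Piece12} {c : ZMod n → Bool}
    (hn : 2 ≤ n) (hinj : Function.Injective f)
    (hedge : ∀ i, if c i then C12 (f i) (f (i+1)) else S12 (f i) (f (i+1)))
    (j : ZMod n) (hj : f j = T2b1 ∨ f j = T2b2) : ∀ i, c i = false := by
  have notC : ∀ p q, C12 p q → p ≠ T2b1 ∧ p ≠ T2b2 ∧ q ≠ T2b1 ∧ q ≠ T2b2 := by
    rintro p q ⟨-, hp, hq⟩
    rcases hp with rfl|rfl|rfl|rfl <;> rcases hq with rfl|rfl|rfl|rfl <;> simp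
  have neigh : ∀ p q, S12 p q → (p = T2b1 → q = T2a1) ∧ (p = T2b2 → q = T2a2) ∧
      (q = T2b1 → p = T2a1) ∧ (q = T2b2 → p = T2a2) := by
    rintro p q (⟨rfl,rfl⟩|⟨rfl,rfl⟩|⟨rfl,rfl⟩|⟨rfl,rfl⟩) <;> simp
  have hcj : c j = false := by
    by_contra h; rw [Bool.not_eq_false] at h
    have hC := hedge j; rw [h] at hC; simp only [if_true] at hC
    rcases hj with hj|hj
    · exact (notC _ _ hC).1 hj
    · exact (notC _ _ hC).2.1 hj
  have hcj' : c (j-1) = false := by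
    by_contra h; rw [Bool.not_eq_false] at h
    have hC := hedge (j-1); rw [h] at hC; simp only [if_true, sub_add_cancel] at hC
    rcases hj with hj|hj
    · exact (notC _ _ hC).2.2.1 hj
    · exact (notC _ _ hC).2.2.2 hj
  have hSj := hedge j; rw [hcj] at hSj; simp only [Bool.false_eq_true, if_false] at hSj
  have hSj' := hedge (j-1); rw [hcj'] at hSj'
  simp only [Bool.false_eq_true, if_false, sub_add_cancel] at hSj'
  have heq : f (j-1) = f (j+1) := by
    rcases hj with hj|hj
    · rw [(neigh _ _ hSj').2.2.1 hj, (neigh _ _ hSj).1 hj]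
    · rw [(neigh _ _ hSj').2.2.2 hj, (neigh _ _ hSj).2.1 hj]
  have h2 : j - 1 = j + 1 := hinj heq
  have h20 : (2 : ZMod n) = 0 := by linear_combination -h2
  have hn2 : n = 2 := by
    have hdvd : n ∣ 2 := by
      have := (ZMod.natCast_eq_zero_iff 2 n).mp (by exact_mod_cast h20)
      exact this
    have := Nat.le_of_dvd (by norm_num) hdvd
    omega
  subst hn2
  intro i
  have hall : ∀ x : ZMod 2, x = 0 ∨ x = 1 := by decide
  have : i = j ∨ i = j + 1 := by
    rcases hall (i - j) with h|h
    · left; linear_combination h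
    · right; linear_combination h
  rcases this with rfl | rfl
  · exact hcj
  · rw [← h2]; exact hcj'

/-- For the chopping of `T1 = W(A)W(B)` and `T2 = W(B)W(A)R(C)` into
`T2a = W(B)` and `T2b = W(A)R(C)` with `T1` unchopped, where `T2` acquires the lock on
`A` before all other locks, the SC-graph (with two instances of each transaction)
contains no cycle with both an S-edge and a C-edge. -/
theorem stmt12 :
    ¬ ∃ (n : ℕ) (f : ZMod n → Piece12) (c : ZMod n → Bool), IsSCCycle S12 C12 n f c := by
  rintro ⟨n, f, c, hn, hinj, hedge, ⟨it, hit⟩, ⟨is, his⟩⟩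
  have hS := hedge is; rw [his] at hS; simp only [Bool.false_eq_true, if_false] at hS
  have : ∃ j, f j = T2b1 ∨ f j = T2b2 := by
    rcases hS with ⟨h1,h2⟩|⟨h1,h2⟩|⟨h1,h2⟩|⟨h1,h2⟩
    · exact ⟨is+1, Or.inl h2⟩
    · exact ⟨is, Or.inl h1⟩
    · exact ⟨is+1, Or.inr h2⟩
    · exact ⟨is, Or.inr h1⟩
  obtain ⟨j, hj⟩ := this
  have := aux12 hn hinj hedge j hj it
  rw [hit] at this; simp at this
end
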